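/- For every n ≥ 1, the number of n-lists (τ₁,...,τ_n) of stabilized-interval-free permutations (each τ_i a SIF permutation of [m_i] for some m_i ≥ 0, the empty permutation allowed) whose total length Σ m_i equals n-1 is exactly n!. -/

import Mathlib

/-!
Let `a j` be the number of SIF permutations of `[j]`, `A = ∑ a j X ^ j` and `F = ∑ m! X ^ m`.
Call `x` a *head* of a permutation `σ` of `[m]` if no `σ`-stable interval `[l, r)` with
`1 ≤ l ≤ x < r ≤ m` contains it; `0` is always a head. The gaps between consecutive heads are
`σ`-stable, and `σ` permutes the heads as a SIF permutation. Conversely a SIF permutation of `j`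
heads together with `j` arbitrary permutations of the gaps assembles into a permutation whose heads
are exactly the given ones. Hence `F = A(X F)`.

The `n`-lists in question are counted by `[X^(n-1)] A^n`, and Lagrange inversion turns this into
`n [X^(n-1)] F = n!`. Lagrange inversion is proved bijectively: by the cycle lemma exactly one of
the `n` rotations of such a list satisfies the Łukasiewicz condition, and the lists satisfying it
obey the recursion of the coefficients of the powers of `F`.
-/

def Stab {n : ℕ} (σ : Equiv.Perm (Fin n)) (S : Finset (Fin n)) : Prop :=
  S.image σ = S

def SIF {n : ℕ} (σ : Equiv.Perm (Fin n)) : Prop :=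
  ∀ a b : Fin n, (Finset.Icc a b).Nonempty → Finset.Icc a b ≠ Finset.univ →
    ¬ Stab σ (Finset.Icc a b)

open Equiv Finset PowerSeries
open scoped Nat

/-! ### Tuples of graded objects -/

section GradedTuples

variable {α : ℕ → Type*}

noncomputable def genSeries (α : ℕ → Type*) : ℕ⟦X⟧ :=
  PowerSeries.mk fun s => Nat.card (α s)

theorem coeff_genSeries (α : ℕ → Type*) (s : ℕ) : coeff s (genSeries α) = Nat.card (α s) :=
  coeff_mk _ _

abbrev Tuples (α : ℕ → Type*) (k m : ℕ) : Type _ :=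
  {b : Fin k → Σ s, α s // ∑ i, (b i).1 = m}

namespace Tuples

def consEquiv (k m : ℕ) :
    Tuples α (k + 1) m ≃ Σ x : antidiagonal m, α x.1.1 × Tuples α k x.1.2 where
  toFun b := ⟨⟨((b.1 0).1, ∑ i : Fin k, (b.1 i.succ).1),
    mem_antidiagonal.2 (by simpa [Fin.sum_univ_succ] using b.2)⟩,
    (b.1 0).2, fun i => b.1 i.succ, rfl⟩
  invFun x := ⟨Fin.cons ⟨x.1.1.1, x.2.1⟩ x.2.2.1, by
    simp [Fin.sum_univ_succ, x.2.2.2, mem_antidiagonal.1 x.1.2]⟩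
  left_inv b := Subtype.ext (Fin.cons_self_tail b.1)
  right_inv := by
    rintro ⟨⟨⟨s, t⟩, h⟩, g, f, hf⟩
    dsimp only at hf
    subst hf
    rfl

theorem card_zero (m : ℕ) : Nat.card (Tuples α 0 m) = if m = 0 then 1 else 0 := by
  split_ifs with hm
  · subst hm
    have : Unique (Tuples α 0 0) :=
      { default := ⟨Fin.elim0, rfl⟩, uniq := fun b => Subtype.ext (funext fun i => i.elim0) }
    exact Nat.card_unique
  · have : IsEmpty (Tuples α 0 m) := ⟨fun b => hm (by simpa using b.2.symm)⟩
    exact Nat.card_of_isEmpty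

instance [∀ s, Finite (α s)] (k m : ℕ) : Finite (Tuples α k m) := by
  induction k generalizing m with
  | zero => exact Finite.of_injective _ Subtype.val_injective
  | succ k ih => exact Finite.of_equiv _ (consEquiv k m).symm

theorem card_eq_coeff [∀ s, Finite (α s)] (k m : ℕ) :
    Nat.card (Tuples α k m) = coeff m (genSeries α ^ k) := by
  induction k generalizing m with
  | zero => rw [card_zero, pow_zero, coeff_one]
  | succ k ih =>
    rw [Nat.card_congr (consEquiv k m), Nat.card_sigma, pow_succ', coeff_mul,
      ← sum_coe_sort (antidiagonal m)]
    refine Fintype.sum_congr _ _ fun x => ?_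
    rw [Nat.card_prod, ih, coeff_genSeries]

end Tuples

def sizes {n : ℕ} (b : Fin n → Σ s, α s) : List ℕ :=
  List.ofFn fun i => (b i).1

theorem sizes_cons {n : ℕ} (p : Σ s, α s) (f : Fin n → Σ s, α s) :
    sizes (Fin.cons p f) = p.1 :: sizes f := by
  simp [sizes, List.ofFn_succ]

theorem sum_sizes {n : ℕ} (b : Fin n → Σ s, α s) : (sizes b).sum = ∑ i, (b i).1 := by
  simp [sizes, List.sum_ofFn]

theorem sizes_rotate {n : ℕ} (b : Fin n → Σ s, α s) (i : Fin n) :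
    sizes (fun x => b (x + i)) = (sizes b).rotate i := by
  refine List.ext_getElem (by simp [sizes]) fun x h₁ h₂ => ?_
  simp [sizes, List.getElem_rotate, Fin.add_def]

theorem sum_fst_add {n : ℕ} [NeZero n] (b : Fin n → Σ s, α s) (i : Fin n) :
    ∑ x, (b (x + i)).1 = ∑ x, (b x).1 :=
  Equiv.sum_comp (Equiv.addRight i) fun x => (b x).1

end GradedTuples

/-! ### The Łukasiewicz condition and Lagrange inversion -/

-- The path `k, k + l₀ - 1, k + l₀ + l₁ - 2, …` stays positive until its last step.
def IsDominated (k : ℕ) (l : List ℕ) : Prop :=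
  ∀ t < l.length, t < k + (l.take t).sum

theorem isDominated_cons {k s : ℕ} {l : List ℕ} :
    IsDominated (k + 1) (s :: l) ↔ IsDominated (k + s) l := by
  constructor
  · intro h t ht
    have := h (t + 1) (by simpa using ht)
    simp only [List.take_succ_cons, List.sum_cons] at this
    omega
  · rintro h (_ | t) ht
    · omega
    · have := h t (by simpa using ht)
      simp only [List.take_succ_cons, List.sum_cons]
      omega

theorem not_isDominated_zero {l : List ℕ} (hl : l ≠ []) : ¬ IsDominated 0 l := fun h =>
  absurd (h 0 (List.length_pos_iff.2 hl)) (by simp)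

section DominatedTuples

variable {α : ℕ → Type*}

abbrev Dominated (α : ℕ → Type*) (k n : ℕ) : Type _ :=
  {b : Fin n → Σ s, α s // ∑ i, (b i).1 + k = n ∧ IsDominated k (sizes b)}

namespace Dominated

def consEquiv (k m : ℕ) :
    Dominated α (k + 1) (m + k + 1) ≃
      Σ x : antidiagonal m, α x.1.1 × Dominated α (k + x.1.1) (m + k) where
  toFun b :=
    have hsum : (b.1 0).1 + ∑ i : Fin (m + k), (b.1 i.succ).1 + (k + 1) = m + k + 1 :=
      (Fin.sum_univ_succ fun i => (b.1 i).1) ▸ b.2.1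
    ⟨⟨((b.1 0).1, ∑ i : Fin (m + k), (b.1 i.succ).1), mem_antidiagonal.2 (by omega)⟩,
      (b.1 0).2, fun i => b.1 i.succ, by dsimp only; omega, by
        have h := b.2.2
        rw [← Fin.cons_self_tail b.1, sizes_cons, isDominated_cons] at h
        exact h⟩
  invFun x := ⟨Fin.cons ⟨x.1.1.1, x.2.1⟩ x.2.2.1, by
    have := mem_antidiagonal.1 x.1.2
    have := x.2.2.2.1
    simp only [Fin.sum_univ_succ, Fin.cons_zero, Fin.cons_succ]
    omega, by simpa only [sizes_cons, isDominated_cons] using x.2.2.2.2⟩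
  left_inv b := Subtype.ext (Fin.cons_self_tail b.1)
  right_inv := by
    rintro ⟨⟨⟨s, t⟩, h⟩, g, f, hf⟩
    obtain rfl : ∑ i, (f i).1 = t := by
      have := mem_antidiagonal.1 h
      dsimp only at hf this
      omega
    rfl

instance [∀ s, Finite (α s)] (k n : ℕ) : Finite (Dominated α k n) :=
  Finite.of_injective (β := Tuples α n (n - k)) (fun b => ⟨b.1, by have := b.2.1; omega⟩)
    fun _ _ h => Subtype.ext (by simpa using congrArg Subtype.val h)

theorem card_zero (m : ℕ) : Nat.card (Dominated α 0 m) = if m = 0 then 1 else 0 := by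
  split_ifs with hm
  · subst hm
    have : Unique (Dominated α 0 0) :=
      { default := ⟨Fin.elim0, by simp, fun t ht => by simp [sizes] at ht⟩,
        uniq := fun b => Subtype.ext (funext fun i => i.elim0) }
    exact Nat.card_unique
  · have : IsEmpty (Dominated α 0 m) :=
      ⟨fun b => not_isDominated_zero (by simpa [sizes] using hm) b.2.2⟩
    exact Nat.card_of_isEmpty

end Dominated

end DominatedTuples

section FunctionalEquation

variable {R : Type*} [CommSemiring R] {F : R⟦X⟧} {a : ℕ → R}

-- `hF` says `F = ∑ j, a j • (X * F) ^ j`, read coefficientwise.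
theorem coeff_eq_coeff_truncated_sum
    (hF : ∀ m, coeff m F = ∑ x ∈ antidiagonal m, a x.1 * coeff x.2 (F ^ x.1)) {m p : ℕ}
    (hp : p ≤ m) : coeff p F = coeff p (∑ j ∈ range (m + 1), C (a j) * X ^ j * F ^ j) := by
  rw [hF, Nat.sum_antidiagonal_eq_sum_range_succ_mk, map_sum,
    ← sum_subset (range_subset_range.2 (show p + 1 ≤ m + 1 by omega))]
  · refine sum_congr rfl fun j hj => ?_
    rw [mul_assoc, coeff_C_mul, coeff_X_pow_mul', if_pos (by simpa [Nat.lt_succ_iff] using hj)]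
  · intro j _ hj
    rw [mul_assoc, coeff_C_mul, coeff_X_pow_mul', if_neg (by simpa [Nat.lt_succ_iff] using hj),
      mul_zero]

theorem coeff_pow_succ_eq_sum
    (hF : ∀ m, coeff m F = ∑ x ∈ antidiagonal m, a x.1 * coeff x.2 (F ^ x.1)) (k m : ℕ) :
    coeff m (F ^ (k + 1)) = ∑ x ∈ antidiagonal m, a x.1 * coeff x.2 (F ^ (k + x.1)) := by
  have htrunc : coeff m (F * F ^ k) =
      coeff m ((∑ j ∈ range (m + 1), C (a j) * X ^ j * F ^ j) * F ^ k) := by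
    rw [coeff_mul, coeff_mul]
    exact sum_congr rfl fun x hx => by
      rw [coeff_eq_coeff_truncated_sum hF (HasAntidiagonal.antidiagonal.fst_le hx)]
  rw [pow_succ', htrunc, sum_mul, map_sum, Nat.sum_antidiagonal_eq_sum_range_succ_mk]
  refine sum_congr rfl fun j hj => ?_
  rw [mul_assoc, mul_assoc, coeff_C_mul, ← pow_add, coeff_X_pow_mul',
    if_pos (by simpa [Nat.lt_succ_iff] using hj), add_comm j k]

end FunctionalEquation

theorem Dominated.card_eq_coeff {α : ℕ → Type*} [∀ s, Finite (α s)] {F : ℕ⟦X⟧}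
    (hF : ∀ m, coeff m F = ∑ x ∈ antidiagonal m, Nat.card (α x.1) * coeff x.2 (F ^ x.1))
    (k m : ℕ) : Nat.card (Dominated α k (m + k)) = coeff m (F ^ k) := by
  obtain ⟨n, hn⟩ : ∃ n, m + k = n := ⟨_, rfl⟩
  induction n generalizing k m with
  | zero =>
    obtain ⟨rfl, rfl⟩ : m = 0 ∧ k = 0 := by omega
    simp [Dominated.card_zero]
  | succ n ih =>
    cases k with
    | zero => rw [add_zero, Dominated.card_zero, pow_zero, coeff_one]
    | succ k =>
      rw [← add_assoc, Nat.card_congr (Dominated.consEquiv k m), Nat.card_sigma,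
        coeff_pow_succ_eq_sum (a := fun j => Nat.card (α j)) hF, ← sum_coe_sort (antidiagonal m)]
      refine Fintype.sum_congr _ _ fun x => ?_
      have hx := mem_antidiagonal.1 x.2
      rw [Nat.card_prod, show m + k = x.1.2 + (k + x.1.1) by omega, ih _ _ (by omega)]

/-! ### The cycle lemma -/

-- The unique `i` is the first point where `S` attains its minimum on `[0, n)`.
theorem existsUnique_lt_forall_le_add {S : ℕ → ℤ} {n : ℕ} (hn : 0 < n)
    (hS : ∀ t < n, S (t + n) = S t - 1) : ∃! i, i < n ∧ ∀ t < n, S i ≤ S (i + t) := by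
  classical
  have hmin : ∃ i, i < n ∧ ∀ t < n, S i ≤ S t := by
    obtain ⟨i, hi, h⟩ := (range n).exists_min_image S (nonempty_range_iff.2 hn.ne')
    exact ⟨i, mem_range.1 hi, fun t ht => h t (mem_range.2 ht)⟩
  obtain ⟨hi₀, hle⟩ := Nat.find_spec hmin
  set i₀ := Nat.find hmin
  have hlt : ∀ t < i₀, S i₀ < S t := fun t ht => by
    have hnot := Nat.find_min hmin ht
    simp only [not_and, not_forall, not_le] at hnot
    obtain ⟨u, hu, hut⟩ := hnot (by omega)
    exact (hle u hu).trans_lt hut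
  refine ⟨i₀, ⟨hi₀, fun t ht => ?_⟩, fun i ⟨hi, hgood⟩ => ?_⟩
  · by_cases h : i₀ + t < n
    · exact hle _ h
    · have := hS (i₀ + t - n) (by omega)
      rw [Nat.sub_add_cancel (by omega)] at this
      have := hlt (i₀ + t - n) (by omega)
      omega
  · by_contra hne
    rcases Nat.lt_or_gt_of_ne hne with h | h
    · have := hgood (i₀ - i) (by omega)
      rw [Nat.add_sub_cancel' h.le] at this
      have := hlt i h
      omega
    · have := hgood (n - (i - i₀)) (by omega)
      rw [show i + (n - (i - i₀)) = i₀ + n by omega, hS i₀ hi₀] at this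
      have := hle i hi
      omega

theorem sum_take_append_sum_take_rotate (l : List ℕ) {i t : ℕ} (hi : i ≤ l.length)
    (ht : t ≤ l.length) :
    ((l ++ l).take i).sum + ((l.rotate i).take t).sum = ((l ++ l).take (i + t)).sum := by
  have hwindow : (l.drop i ++ l.take i).take t = (l.drop i ++ l).take t := by
    rw [List.take_append, List.take_append, List.take_take, List.length_drop,
      min_eq_left (by omega)]
  rw [List.take_add, List.sum_append, List.drop_append_of_le_length hi, ← hwindow,
    ← List.rotate_eq_drop_append_take hi]

theorem existsUnique_isDominated_rotate {l : List ℕ} (hl : l.sum + 1 = l.length) :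
    ∃! i, i < l.length ∧ IsDominated 1 (l.rotate i) := by
  set S : ℕ → ℤ := fun t => ((l ++ l).take t).sum - t
  have hS : ∀ t < l.length, S (t + l.length) = S t - 1 := fun t ht => by
    have := sum_take_append_sum_take_rotate l le_rfl ht.le
    rw [List.rotate_length, List.take_append_of_le_length le_rfl, List.take_length] at this
    simp only [S]
    rw [add_comm t, List.take_append_of_le_length ht.le, Nat.cast_add]
    omega
  have hdom : ∀ i < l.length, IsDominated 1 (l.rotate i) ↔ ∀ t < l.length, S i ≤ S (i + t) := by
    intro i hi
    simp only [IsDominated, List.length_rotate]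
    refine forall₂_congr fun t ht => ?_
    have := sum_take_append_sum_take_rotate l hi.le ht.le
    simp only [S]
    omega
  obtain ⟨i, ⟨hi, hgood⟩, huniq⟩ := existsUnique_lt_forall_le_add (by omega) hS
  exact ⟨i, ⟨hi, (hdom i hi).2 hgood⟩, fun j ⟨hj, h⟩ => huniq j ⟨hj, (hdom j hj).1 h⟩⟩

section Cycle

variable {α : ℕ → Type*}

theorem card_isDominated_rotations {m : ℕ} (b : Tuples α (m + 1) m) :
    Nat.card {i : Fin (m + 1) // IsDominated 1 (sizes fun x => b.1 (x + i))} = 1 := by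
  have hl : (sizes b.1).sum + 1 = (sizes b.1).length := by
    rw [sum_sizes, b.2]
    simp [sizes]
  obtain ⟨i, ⟨hi, hdom⟩, huniq⟩ := existsUnique_isDominated_rotate hl
  rw [Nat.card_eq_one_iff_exists]
  refine ⟨⟨⟨i, by simpa [sizes] using hi⟩, by rwa [sizes_rotate]⟩, fun j => Subtype.ext ?_⟩
  refine Fin.ext (huniq j.1 ⟨by simpa [sizes] using j.1.2, ?_⟩)
  simpa [sizes_rotate] using j.2

def rotationEquiv (m : ℕ) :
    (Σ b : Tuples α (m + 1) m, {i : Fin (m + 1) // IsDominated 1 (sizes fun x => b.1 (x + i))})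
      ≃ Fin (m + 1) × Dominated α 1 (m + 1) where
  toFun p := (p.2.1, ⟨fun x => p.1.1 (x + p.2.1), by simp only [sum_fst_add, p.1.2], p.2.2⟩)
  invFun q := ⟨⟨fun x => q.2.1 (x + -q.1), by simpa [sum_fst_add] using q.2.2.1⟩, q.1,
    by simpa using q.2.2.2⟩
  left_inv p := Sigma.subtype_ext (Subtype.ext (funext fun x => by simp)) rfl
  right_inv q := Prod.ext rfl (Subtype.ext (funext fun x => by simp))

theorem card_tuples_eq_mul_card_dominated [∀ s, Finite (α s)] (m : ℕ) :
    Nat.card (Tuples α (m + 1) m) = (m + 1) * Nat.card (Dominated α 1 (m + 1)) := by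
  have := Fintype.ofFinite (Tuples α (m + 1) m)
  have h := Nat.card_congr (rotationEquiv (α := α) m)
  rw [Nat.card_sigma, Fintype.sum_congr _ _ card_isDominated_rotations, Nat.card_prod,
    Nat.card_fin, sum_const, card_univ, smul_eq_mul, mul_one, ← Nat.card_eq_fintype_card] at h
  exact h

end Cycle

/-! ### Stable intervals and heads of a permutation -/

theorem stab_iff_forall_mem {n : ℕ} {σ : Perm (Fin n)} {S : Finset (Fin n)} :
    Stab σ S ↔ ∀ x ∈ S, σ x ∈ S :=
  ⟨fun h _ hx => h ▸ mem_image_of_mem σ hx, fun h => eq_of_subset_of_card_le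
    (image_subset_iff.2 h) (card_image_of_injective S σ.injective).ge⟩

theorem Set.MapsTo.perm_inv {g : Perm ℕ} {s : Set ℕ} (hs : s.Finite) (h : Set.MapsTo g s s) :
    Set.MapsTo ⇑g⁻¹ s s := fun y hy => by
  obtain ⟨x, hx, rfl⟩ := ((hs.injOn_iff_bijOn_of_mapsTo h).1 g.injective.injOn).surjOn hy
  simpa using hx

section NatPerm

variable {m : ℕ}

def natPerm (σ : Perm (Fin m)) : Perm ℕ :=
  σ.extendDomain Fin.equivSubtype

theorem natPerm_apply_of_lt (σ : Perm (Fin m)) {x : ℕ} (hx : x < m) :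
    natPerm σ x = σ ⟨x, hx⟩ := by
  rw [natPerm, Perm.extendDomain_apply_subtype σ Fin.equivSubtype (p := (· < m)) hx]
  rfl

theorem natPerm_apply_fin (σ : Perm (Fin m)) (x : Fin m) : natPerm σ x = σ x :=
  natPerm_apply_of_lt σ x.2

theorem natPerm_apply_of_le (σ : Perm (Fin m)) {x : ℕ} (hx : m ≤ x) : natPerm σ x = x :=
  Perm.extendDomain_apply_not_subtype _ _ (by simpa using hx)

theorem natPerm_lt (σ : Perm (Fin m)) {x : ℕ} (hx : x < m) : natPerm σ x < m := by
  rw [natPerm_apply_of_lt σ hx]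
  exact Fin.isLt _

theorem natPerm_injective : Function.Injective (natPerm (m := m)) := fun σ τ h =>
  Equiv.ext fun x => Fin.ext <| by simpa [natPerm_apply_fin] using congr($h x)

end NatPerm

theorem sigma_eq_of_natPerm_eq {p q : Σ s, Perm (Fin s)} (h₁ : p.1 = q.1)
    (h₂ : natPerm p.2 = natPerm q.2) : p = q := by
  obtain ⟨s, σ⟩ := p
  obtain ⟨s', σ'⟩ := q
  obtain rfl : s = s' := h₁
  rw [show σ = σ' from natPerm_injective h₂]

section Heads

variable {m : ℕ} (σ : Perm (Fin m))

def IsCovered (x : ℕ) : Prop :=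
  ∃ l r, 0 < l ∧ l ≤ x ∧ x < r ∧ r ≤ m ∧ Set.MapsTo (natPerm σ) (Set.Ico l r) (Set.Ico l r)

theorem not_isCovered_zero : ¬ IsCovered σ 0 := by
  rintro ⟨l, r, hl, hlx, -⟩
  omega

theorem isCovered_natPerm_iff {x : ℕ} : IsCovered σ (natPerm σ x) ↔ IsCovered σ x := by
  refine ⟨fun ⟨l, r, hl, hlx, hxr, hrm, hst⟩ => ?_, fun ⟨l, r, hl, hlx, hxr, hrm, hst⟩ => ?_⟩
  · have := (hst.perm_inv (Set.finite_Ico l r)) (Set.mem_Ico.2 ⟨hlx, hxr⟩)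
    simp only [Perm.coe_inv, symm_apply_apply] at this
    exact ⟨l, r, hl, this.1, this.2, hrm, hst⟩
  · have := hst (Set.mem_Ico.2 ⟨hlx, hxr⟩)
    exact ⟨l, r, hl, this.1, this.2, hrm, hst⟩

theorem mapsTo_Ico_of_mapsTo_Ico_zero {r : ℕ}
    (h : Set.MapsTo (natPerm σ) (Set.Ico 0 r) (Set.Ico 0 r)) :
    Set.MapsTo (natPerm σ) (Set.Ico r m) (Set.Ico r m) := by
  intro x ⟨hrx, hxm⟩
  refine ⟨?_, natPerm_lt σ hxm⟩
  by_contra hlt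
  have := (h.perm_inv (Set.finite_Ico 0 r)) (Set.mem_Ico.2 ⟨Nat.zero_le _, not_le.1 hlt⟩)
  simp only [Perm.coe_inv, symm_apply_apply] at this
  exact absurd this.2 (not_lt.2 hrx)

open Classical in
noncomputable def heads : Finset ℕ :=
  (range m).filter fun x => ¬ IsCovered σ x

variable {σ}

theorem mem_heads {x : ℕ} : x ∈ heads σ ↔ x < m ∧ ¬ IsCovered σ x := by
  simp [heads]

theorem natPerm_mem_heads {x : ℕ} (hx : x ∈ heads σ) : natPerm σ x ∈ heads σ :=
  mem_heads.2 ⟨natPerm_lt σ (mem_heads.1 hx).1, (isCovered_natPerm_iff σ).not.2 (mem_heads.1 hx).2⟩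

end Heads

/-! ### Block decompositions -/

section Blocks

variable {j m : ℕ} (s : Fin j → ℕ)

-- Block `i` is the head `blockStart s i` followed by its gap of length `s i`.
def blockStart (i : ℕ) : ℕ :=
  i + ((List.ofFn s).take i).sum

def gap (i : Fin j) : Set ℕ :=
  Set.Ico (blockStart s i + 1) (blockStart s i + 1 + s i)

theorem blockStart_zero : blockStart s 0 = 0 := by
  simp [blockStart]

theorem blockStart_succ (i : Fin j) : blockStart s (i + 1) = blockStart s i + 1 + s i := by
  simp only [blockStart, List.sum_take_succ _ _ (by simp : (i : ℕ) < (List.ofFn s).length),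
    List.getElem_ofFn, Fin.eta]
  omega

theorem blockStart_length : blockStart s j = j + ∑ i, s i := by
  rw [blockStart, List.take_of_length_le (by simp), List.sum_ofFn]

theorem le_blockStart (i : ℕ) : i ≤ blockStart s i :=
  Nat.le_add_right _ _

theorem strictMono_blockStart : StrictMono (blockStart s) :=
  strictMono_nat_of_lt_succ fun i => by
    simp only [blockStart, List.take_add_one, List.sum_append]
    omega

theorem add_mem_gap (i : Fin j) {o : ℕ} (ho : o < s i) : blockStart s i + 1 + o ∈ gap s i :=
  ⟨by omega, by omega⟩

def blockEquiv (h : j + ∑ i, s i = m) : (Σ i, Fin (s i + 1)) ≃ Fin m :=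
  finSigmaFinEquiv.trans (finCongr (by rw [sum_add_distrib, ← h]; simp [add_comm]))

theorem blockEquiv_apply (h : j + ∑ i, s i = m) (x : Σ i, Fin (s i + 1)) :
    (blockEquiv s h x : ℕ) = blockStart s x.1 + x.2 := by
  simp only [blockEquiv, Equiv.trans_apply, finCongr_apply, Fin.val_cast, finSigmaFinEquiv_apply,
    sum_add_distrib, blockStart, ← Fin.ofFn_take_eq_take_ofFn x.1.2.le, List.sum_ofFn]
  simp [Fin.take, add_comm]

theorem blockStart_lt (h : j + ∑ i, s i = m) (i : Fin j) : blockStart s i < m := by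
  simpa [blockEquiv_apply] using (blockEquiv s h ⟨i, 0⟩).2

theorem blockStart_succ_le (h : j + ∑ i, s i = m) (i : Fin j) : blockStart s (i + 1) ≤ m :=
  h ▸ blockStart_length s ▸ (strictMono_blockStart s).monotone i.2

theorem eq_blockStart_or_mem_gap (h : j + ∑ i, s i = m) {x : ℕ} (hx : x < m) :
    (∃ i : Fin j, x = blockStart s i) ∨ ∃ i : Fin j, x ∈ gap s i := by
  obtain ⟨⟨i, o⟩, hio⟩ := (blockEquiv s h).surjective ⟨x, hx⟩
  have hval := blockEquiv_apply s h ⟨i, o⟩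
  rw [hio] at hval
  cases o using Fin.cases with
  | zero => exact Or.inl ⟨i, by simpa using hval⟩
  | succ o =>
    refine Or.inr ⟨i, ?_, ?_⟩ <;> simp only [Fin.val_succ] at hval <;> omega

variable {s}

theorem sigma_mk_zero_congr {a b : Fin j} (h : a = b) :
    (⟨a, 0⟩ : Σ i, Fin (s i + 1)) = ⟨b, 0⟩ :=
  h ▸ rfl

def blockPerm (τ : Perm (Fin j)) (π : ∀ i, Perm (Fin (s i))) : Perm (Σ i, Fin (s i + 1)) where
  toFun x := Fin.cases ⟨τ x.1, 0⟩ (fun o => ⟨x.1, (π x.1 o).succ⟩) x.2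
  invFun x := Fin.cases ⟨τ⁻¹ x.1, 0⟩ (fun o => ⟨x.1, ((π x.1)⁻¹ o).succ⟩) x.2
  left_inv := by
    rintro ⟨i, o⟩
    cases o using Fin.cases with
    | zero => exact sigma_mk_zero_congr (τ.symm_apply_apply i)
    | succ o => exact congrArg (Sigma.mk i) (congrArg Fin.succ ((π i).symm_apply_apply o))
  right_inv := by
    rintro ⟨i, o⟩
    cases o using Fin.cases with
    | zero => exact sigma_mk_zero_congr (τ.apply_symm_apply i)
    | succ o => exact congrArg (Sigma.mk i) (congrArg Fin.succ ((π i).apply_symm_apply o))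

def assemble (τ : Perm (Fin j)) (π : ∀ i, Perm (Fin (s i))) (h : j + ∑ i, s i = m) :
    Perm (Fin m) :=
  (blockEquiv s h).permCongr (blockPerm τ π)

variable (τ : Perm (Fin j)) (π : ∀ i, Perm (Fin (s i))) (h : j + ∑ i, s i = m)

theorem natPerm_assemble_blockEquiv (x : Σ i, Fin (s i + 1)) :
    natPerm (assemble τ π h) (blockEquiv s h x) = blockEquiv s h (blockPerm τ π x) := by
  rw [natPerm_apply_fin, assemble, permCongr_apply, symm_apply_apply]

theorem natPerm_assemble_blockStart (i : Fin j) :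
    natPerm (assemble τ π h) (blockStart s i) = blockStart s (τ i) := by
  simpa [blockEquiv_apply, blockPerm] using natPerm_assemble_blockEquiv τ π h ⟨i, 0⟩

theorem natPerm_assemble_gap (i : Fin j) {o : ℕ} (ho : o < s i) :
    natPerm (assemble τ π h) (blockStart s i + 1 + o) = blockStart s i + 1 + natPerm (π i) o := by
  simpa [blockEquiv_apply, blockPerm, natPerm_apply_of_lt _ ho, add_assoc, add_comm 1] using
    natPerm_assemble_blockEquiv τ π h ⟨i, (⟨o, ho⟩ : Fin (s i)).succ⟩

end Blocks

theorem Monotone.Icc_min'_max'_eq_filter {α β : Type*} [LinearOrder α] [Fintype α]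
    [LocallyFiniteOrder α] [LinearOrder β] {f : α → β} (hf : Monotone f) {l r : β}
    (hT : (univ.filter fun t => f t ∈ Set.Ico l r).Nonempty) :
    Icc (min' _ hT) (max' _ hT) = univ.filter fun t => f t ∈ Set.Ico l r := by
  ext t
  have hmin := (mem_filter.1 (min'_mem _ hT)).2
  have hmax := (mem_filter.1 (max'_mem _ hT)).2
  refine ⟨fun ht => ?_, fun ht => mem_Icc.2 ⟨min'_le _ _ ht, le_max' _ _ ht⟩⟩
  obtain ⟨h₁, h₂⟩ := mem_Icc.1 ht
  exact mem_filter.2 ⟨mem_univ _, hmin.1.trans (hf h₁), (hf h₂).trans_lt hmax.2⟩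

section BlockDecomposition

variable {j m : ℕ}

structure IsBlockDecomposition (σ : Perm (Fin m)) (s : Fin j → ℕ) (τ : Perm (Fin j)) :
    Prop where
  total : j + ∑ i, s i = m
  natPerm_blockStart : ∀ i : Fin j, natPerm σ (blockStart s i) = blockStart s (τ i)
  mapsTo_gap : ∀ i : Fin j, Set.MapsTo (natPerm σ) (gap s i) (gap s i)

theorem isBlockDecomposition_assemble {s : Fin j → ℕ} (τ : Perm (Fin j))
    (π : ∀ i, Perm (Fin (s i))) (h : j + ∑ i, s i = m) :
    IsBlockDecomposition (assemble τ π h) s τ := by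
  refine ⟨h, natPerm_assemble_blockStart τ π h, fun i x ⟨hx₁, hx₂⟩ => ?_⟩
  obtain ⟨o, rfl⟩ := Nat.exists_eq_add_of_le hx₁
  rw [natPerm_assemble_gap τ π h i (by omega)]
  exact add_mem_gap s i (natPerm_lt (π i) (by omega))

namespace IsBlockDecomposition

variable {σ : Perm (Fin m)} {s : Fin j → ℕ} {τ : Perm (Fin j)}

theorem isCovered_of_mem_gap (hσ : IsBlockDecomposition σ s τ) {i : Fin j} {x : ℕ}
    (hx : x ∈ gap s i) : IsCovered σ x :=
  ⟨_, _, Nat.succ_pos _, hx.1, hx.2, blockStart_succ s i ▸ blockStart_succ_le s hσ.total i,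
    hσ.mapsTo_gap i⟩

-- The blocks whose heads lie in a `σ`-stable interval form a `τ`-stable interval of blocks,
-- which misses block `0` as soon as the interval avoids `0`.
theorem not_isCovered_blockStart (hσ : IsBlockDecomposition σ s τ) (hτ : SIF τ) (i : Fin j) :
    ¬ IsCovered σ (blockStart s i) := by
  rintro ⟨l, r, hl, hli, hir, -, hst⟩
  set T := univ.filter fun t : Fin j => blockStart s t ∈ Set.Ico l r
  have hTne : T.Nonempty := ⟨i, mem_filter.2 ⟨mem_univ _, hli, hir⟩⟩
  have hIcc : Icc _ _ = T := Monotone.Icc_min'_max'_eq_filter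
    (f := fun t : Fin j => blockStart s t) (fun _ _ h => (strictMono_blockStart s).monotone h) hTne
  refine hτ _ _ (by rw [hIcc]; exact hTne) (fun huniv => ?_) (stab_iff_forall_mem.2 fun t ht => ?_)
  · have h0 : (⟨0, i.pos⟩ : Fin j) ∈ T := by
      rw [← hIcc, huniv]
      exact mem_univ _
    have := (mem_filter.1 h0).2.1
    simp only [blockStart_zero] at this
    omega
  · rw [hIcc] at ht ⊢
    refine mem_filter.2 ⟨mem_univ _, ?_⟩
    rw [← hσ.natPerm_blockStart]
    exact hst (mem_filter.1 ht).2

theorem mapsTo_Ico_blockStart (hσ : IsBlockDecomposition σ s τ) {a b : Fin j}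
    (hab : ∀ t ∈ Icc a b, τ t ∈ Icc a b) :
    Set.MapsTo (natPerm σ) (Set.Ico (blockStart s a) (blockStart s (b + 1)))
      (Set.Ico (blockStart s a) (blockStart s (b + 1))) := by
  intro x ⟨hax, hxb⟩
  have hmono := strictMono_blockStart s
  rcases eq_blockStart_or_mem_gap s hσ.total (hxb.trans_le (blockStart_succ_le s hσ.total b))
    with ⟨i, rfl⟩ | ⟨i, hx⟩
  · have hi : i ∈ Icc a b := mem_Icc.2
      ⟨hmono.le_iff_le.1 hax, Nat.lt_succ_iff.1 (hmono.lt_iff_lt.1 hxb)⟩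
    obtain ⟨ha, hb⟩ := mem_Icc.1 (hab i hi)
    rw [hσ.natPerm_blockStart]
    exact ⟨hmono.monotone ha, hmono (Nat.lt_succ_of_le hb)⟩
  · obtain ⟨hy₁, hy₂⟩ := hσ.mapsTo_gap i hx
    obtain ⟨hx₁, hx₂⟩ := hx
    have hsucc := blockStart_succ s i
    have hai : (a : ℕ) ≤ i := by
      by_contra! hlt
      have := hmono.monotone (show (i : ℕ) + 1 ≤ a by omega)
      omega
    have hib : (i : ℕ) ≤ b := by
      by_contra! hlt
      have := hmono.monotone (show (b : ℕ) + 1 ≤ i by omega)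
      omega
    have := hmono.monotone hai
    have := hmono.monotone (show (i : ℕ) + 1 ≤ b + 1 by omega)
    constructor <;> omega

theorem heads_eq (hσ : IsBlockDecomposition σ s τ) (hτ : SIF τ) :
    heads σ = univ.image fun i : Fin j => blockStart s i := by
  ext x
  simp only [mem_heads, mem_image, mem_univ, true_and]
  refine ⟨fun ⟨hxm, hx⟩ => ?_, ?_⟩
  · rcases eq_blockStart_or_mem_gap s hσ.total hxm with ⟨i, rfl⟩ | ⟨i, hgap⟩
    · exact ⟨i, rfl⟩
    · exact absurd (hσ.isCovered_of_mem_gap hgap) hx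
  · rintro ⟨i, rfl⟩
    exact ⟨blockStart_lt s hσ.total i, hσ.not_isCovered_blockStart hτ i⟩

theorem card_heads (hσ : IsBlockDecomposition σ s τ) (hτ : SIF τ) : (heads σ).card = j := by
  rw [hσ.heads_eq hτ, card_image_of_injective _
    fun _ _ h => Fin.val_injective ((strictMono_blockStart s).injective h), card_univ,
    Fintype.card_fin]

theorem unique {s' : Fin j → ℕ} {τ' : Perm (Fin j)} (hσ : IsBlockDecomposition σ s τ)
    (hσ' : IsBlockDecomposition σ s' τ') (hτ : SIF τ) (hτ' : SIF τ') : s = s' ∧ τ = τ' := by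
  have hmono (s : Fin j → ℕ) : StrictMono fun i : Fin j => blockStart s i :=
    fun _ _ h => strictMono_blockStart s h
  have hrange : (fun i : Fin j => blockStart s i) = fun i : Fin j => blockStart s' i := by
    refine ((hmono s).range_inj (hmono s')).1 ?_
    simpa [Set.image_univ] using
      congrArg (fun T : Finset ℕ => (T : Set ℕ)) ((hσ.heads_eq hτ).symm.trans (hσ'.heads_eq hτ'))
  have hstart (i : ℕ) (hi : i ≤ j) : blockStart s i = blockStart s' i := by
    rcases hi.lt_or_eq with hi | rfl
    · exact congrFun hrange ⟨i, hi⟩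
    · rw [blockStart_length, blockStart_length, hσ.total, hσ'.total]
  obtain rfl : s = s' := funext fun i => by
    have := hstart (i + 1) i.2
    rw [blockStart_succ, blockStart_succ, hstart i i.2.le] at this
    omega
  refine ⟨rfl, Equiv.ext fun i => Fin.val_injective ((strictMono_blockStart s).injective ?_)⟩
  exact (hσ.natPerm_blockStart i).symm.trans (hσ'.natPerm_blockStart i)

noncomputable def gapPerm (hσ : IsBlockDecomposition σ s τ) (i : Fin j) : Perm (Fin (s i)) :=
  Equiv.ofBijective
    (fun o => ⟨natPerm σ (blockStart s i + 1 + o) - (blockStart s i + 1), by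
      have := hσ.mapsTo_gap i (add_mem_gap s i o.2)
      simp only [gap, Set.mem_Ico] at this
      omega⟩)
    (Finite.injective_iff_bijective.1 fun o o' h => by
      have h₁ := hσ.mapsTo_gap i (add_mem_gap s i o.2)
      have h₂ := hσ.mapsTo_gap i (add_mem_gap s i o'.2)
      simp only [gap, Set.mem_Ico, Fin.mk.injEq] at h₁ h₂ h
      have h₃ : natPerm σ (blockStart s i + 1 + o) = natPerm σ (blockStart s i + 1 + o') := by
        omega
      have := (natPerm σ).injective h₃
      exact Fin.ext (by omega))

theorem natPerm_gapPerm (hσ : IsBlockDecomposition σ s τ) (i : Fin j) {o : ℕ} (ho : o < s i) :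
    natPerm σ (blockStart s i + 1 + o) = blockStart s i + 1 + natPerm (hσ.gapPerm i) o := by
  have := hσ.mapsTo_gap i (add_mem_gap s i ho)
  simp only [gap, Set.mem_Ico] at this
  rw [natPerm_apply_of_lt _ ho, gapPerm, ofBijective_apply]
  dsimp only
  omega

theorem eq_assemble_gapPerm (hσ : IsBlockDecomposition σ s τ) :
    σ = assemble τ hσ.gapPerm hσ.total := by
  refine Equiv.ext fun x => Fin.ext ?_
  rw [← natPerm_apply_fin, ← natPerm_apply_fin]
  rcases eq_blockStart_or_mem_gap s hσ.total x.2 with ⟨i, hx⟩ | ⟨i, hx₁, hx₂⟩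
  · rw [hx, hσ.natPerm_blockStart, natPerm_assemble_blockStart]
  · obtain ⟨o, ho⟩ := Nat.exists_eq_add_of_le hx₁
    rw [ho, hσ.natPerm_gapPerm i (by omega), natPerm_assemble_gap _ _ _ i (by omega)]

end IsBlockDecomposition

theorem eq_of_assemble_eq {τ τ' : Perm (Fin j)} {b b' : Fin j → Σ s, Perm (Fin s)}
    {h : j + ∑ i, (b i).1 = m} {h' : j + ∑ i, (b' i).1 = m} (hτ : SIF τ) (hτ' : SIF τ')
    (heq : assemble τ (fun i => (b i).2) h = assemble τ' (fun i => (b' i).2) h') :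
    τ = τ' ∧ b = b' := by
  have hσ := isBlockDecomposition_assemble τ (fun i => (b i).2) h
  have hσ' := isBlockDecomposition_assemble τ' (fun i => (b' i).2) h'
  rw [← heq] at hσ'
  obtain ⟨hs, rfl⟩ := hσ.unique hσ' hτ hτ'
  refine ⟨rfl, funext fun i => sigma_eq_of_natPerm_eq (congrFun hs i) (Equiv.ext fun o => ?_)⟩
  by_cases ho : o < (b i).1
  · have hc : blockStart (fun i => (b' i).1) i = blockStart (fun i => (b i).1) i := by rw [hs]
    have e := natPerm_assemble_gap τ (fun i => (b i).2) h i ho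
    have e' := natPerm_assemble_gap τ (fun i => (b' i).2) h' i (congrFun hs i ▸ ho)
    rw [← heq, hc] at e'
    omega
  · rw [natPerm_apply_of_le _ (not_lt.1 ho),
      natPerm_apply_of_le _ (not_lt.1 (congrFun hs i ▸ ho))]

end BlockDecomposition

section Extraction

variable {m : ℕ} (σ : Perm (Fin m))

-- The `i`-th head in increasing order, and `m` once the heads are exhausted.
noncomputable def headOrEnd (i : ℕ) : ℕ :=
  if h : i < (heads σ).card then (heads σ).orderEmbOfFin rfl ⟨i, h⟩ else m

theorem headOrEnd_of_lt {i : ℕ} (h : i < (heads σ).card) :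
    headOrEnd σ i = (heads σ).orderEmbOfFin rfl ⟨i, h⟩ :=
  dif_pos h

theorem headOrEnd_of_not_lt {i : ℕ} (h : ¬ i < (heads σ).card) : headOrEnd σ i = m :=
  dif_neg h

theorem headOrEnd_mem {i : ℕ} (h : i < (heads σ).card) : headOrEnd σ i ∈ heads σ := by
  rw [headOrEnd_of_lt σ h]
  exact orderEmbOfFin_mem _ _ _

theorem headOrEnd_le (i : ℕ) : headOrEnd σ i ≤ m := by
  by_cases h : i < (heads σ).card
  · exact (mem_heads.1 (headOrEnd_mem σ h)).1.le
  · exact (headOrEnd_of_not_lt σ h).le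

theorem headOrEnd_zero : headOrEnd σ 0 = 0 := by
  rcases Nat.eq_zero_or_pos m with hm | hm
  · exact Nat.le_zero.1 (hm ▸ headOrEnd_le σ 0)
  · have h0 : 0 ∈ heads σ := mem_heads.2 ⟨hm, not_isCovered_zero σ⟩
    rw [headOrEnd_of_lt σ (card_pos.2 ⟨0, h0⟩), orderEmbOfFin_zero]
    exact Nat.le_zero.1 (min'_le _ _ h0)

theorem headOrEnd_lt_succ {i : ℕ} (h : i < (heads σ).card) :
    headOrEnd σ i < headOrEnd σ (i + 1) := by
  by_cases h' : i + 1 < (heads σ).card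
  · rw [headOrEnd_of_lt σ h, headOrEnd_of_lt σ h']
    exact OrderEmbedding.strictMono _ (Fin.mk_lt_mk.2 (Nat.lt_succ_self i))
  · rw [headOrEnd_of_not_lt σ h']
    exact (mem_heads.1 (headOrEnd_mem σ h)).1

theorem headOrEnd_succ_le {i x : ℕ} (h : i < (heads σ).card) (hx : x ∈ heads σ)
    (hlt : headOrEnd σ i < x) : headOrEnd σ (i + 1) ≤ x := by
  obtain ⟨t, rfl⟩ : ∃ t, (heads σ).orderEmbOfFin rfl t = x := by
    simpa [← Set.mem_range, range_orderEmbOfFin] using hx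
  rw [headOrEnd_of_lt σ h, OrderEmbedding.lt_iff_lt] at hlt
  rw [headOrEnd_of_lt σ (by have := t.2; simp only [Fin.lt_def] at hlt; omega)]
  exact OrderEmbedding.monotone _ (Fin.le_def.2 hlt)

noncomputable def gapSizes (i : Fin (heads σ).card) : ℕ :=
  headOrEnd σ (i + 1) - headOrEnd σ i - 1

theorem blockStart_gapSizes {i : ℕ} (hi : i ≤ (heads σ).card) :
    blockStart (gapSizes σ) i = headOrEnd σ i := by
  induction i with
  | zero => rw [blockStart_zero, headOrEnd_zero]
  | succ i ih =>
    have := headOrEnd_lt_succ σ hi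
    rw [blockStart_succ (gapSizes σ) ⟨i, hi⟩, ih (by omega), gapSizes]
    dsimp only
    omega

theorem blockStart_gapSizes_mem {i : ℕ} (hi : i < (heads σ).card) :
    blockStart (gapSizes σ) i ∈ heads σ :=
  blockStart_gapSizes σ hi.le ▸ headOrEnd_mem σ hi

theorem card_heads_add_sum_gapSizes : (heads σ).card + ∑ i, gapSizes σ i = m := by
  rw [← blockStart_length, blockStart_gapSizes σ le_rfl, headOrEnd_of_not_lt σ (lt_irrefl _)]

-- A point of a gap lies in a stable interval, which cannot reach the neighbouring heads.
theorem mapsTo_gap_gapSizes (i : Fin (heads σ).card) :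
    Set.MapsTo (natPerm σ) (gap (gapSizes σ) i) (gap (gapSizes σ) i) := by
  have hlt := headOrEnd_lt_succ σ i.2
  have hsucc_le := headOrEnd_le σ (i + 1)
  intro x hx
  simp only [gap, Set.mem_Ico, blockStart_gapSizes σ i.2.le, gapSizes] at hx ⊢
  have hcov : IsCovered σ x := by
    by_contra hnot
    have := headOrEnd_succ_le σ i.2 (mem_heads.2 ⟨by omega, hnot⟩) (by omega)
    omega
  obtain ⟨l, r, hl, hlx, hxr, hrm, hst⟩ := hcov
  have hil : headOrEnd σ i < l := by
    by_contra! hli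
    exact (mem_heads.1 (headOrEnd_mem σ i.2)).2 ⟨l, r, hl, hli, by omega, hrm, hst⟩
  have hri : r ≤ headOrEnd σ (i + 1) := by
    by_contra! hri
    by_cases h : (i : ℕ) + 1 < (heads σ).card
    · exact (mem_heads.1 (headOrEnd_mem σ h)).2 ⟨l, r, hl, by omega, hri, hrm, hst⟩
    · rw [headOrEnd_of_not_lt σ h] at hri
      omega
  obtain ⟨hy₁, hy₂⟩ := hst ⟨hlx, hxr⟩
  constructor <;> omega

noncomputable def inducedPerm : Perm (Fin (heads σ).card) :=
  Equiv.ofBijective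
    (fun i => ((heads σ).orderIsoOfFin rfl).symm
      ⟨natPerm σ ((heads σ).orderEmbOfFin rfl i), natPerm_mem_heads (orderEmbOfFin_mem _ _ _)⟩)
    (Finite.injective_iff_bijective.1 fun i i' h => by
      simpa using (natPerm σ).injective
        (congrArg Subtype.val (((heads σ).orderIsoOfFin rfl).symm.injective h)))

theorem orderEmbOfFin_inducedPerm (i : Fin (heads σ).card) :
    (heads σ).orderEmbOfFin rfl (inducedPerm σ i) = natPerm σ ((heads σ).orderEmbOfFin rfl i) := by
  rw [← coe_orderIsoOfFin_apply, inducedPerm, ofBijective_apply, OrderIso.apply_symm_apply]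

theorem isBlockDecomposition_inducedPerm :
    IsBlockDecomposition σ (gapSizes σ) (inducedPerm σ) where
  total := card_heads_add_sum_gapSizes σ
  natPerm_blockStart i := by
    rw [blockStart_gapSizes σ i.2.le, blockStart_gapSizes σ (inducedPerm σ i).2.le,
      headOrEnd_of_lt σ i.2, headOrEnd_of_lt σ (inducedPerm σ i).2, Fin.eta, Fin.eta,
      orderEmbOfFin_inducedPerm]
  mapsTo_gap := mapsTo_gap_gapSizes σ

-- If `inducedPerm σ` stabilized a proper interval `[a, b]` of heads, the blocks `a, …, b` would
-- form a `σ`-stable interval; it covers head `a` if `a ≠ 0`, and otherwise its complement covers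
-- head `b + 1`.
theorem sif_inducedPerm : SIF (inducedPerm σ) := by
  intro a b hne hnu hst
  have hσ := isBlockDecomposition_inducedPerm σ
  have hmaps := hσ.mapsTo_Ico_blockStart (stab_iff_forall_mem.1 hst)
  have hab : a ≤ b := nonempty_Icc.1 hne
  rcases Nat.eq_zero_or_pos (a : ℕ) with ha | ha
  · have hb : (b : ℕ) + 1 < (heads σ).card := by
      by_contra hb
      exact hnu (eq_univ_of_forall fun t =>
        mem_Icc.2 ⟨Fin.le_def.2 (by omega), Fin.le_def.2 (by omega)⟩)
    rw [ha, blockStart_zero] at hmaps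
    have hmem := mem_heads.1 (blockStart_gapSizes_mem σ hb)
    exact hmem.2 ⟨_, m, (Nat.succ_pos _).trans_le (le_blockStart _ _), le_rfl, hmem.1, le_rfl,
      mapsTo_Ico_of_mapsTo_Ico_zero σ hmaps⟩
  · have hmem := mem_heads.1 (blockStart_gapSizes_mem σ a.2)
    exact hmem.2 ⟨_, _, ha.trans_le (le_blockStart _ _), le_rfl,
      strictMono_blockStart _ (Nat.lt_succ_of_le hab), blockStart_succ_le _ hσ.total b, hmaps⟩

end Extraction

abbrev SIFPerm (s : ℕ) : Type :=
  {τ : Perm (Fin s) // SIF τ}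

abbrev Decomposition (m : ℕ) : Type :=
  Σ x : antidiagonal m, SIFPerm x.1.1 × Tuples (fun s => Perm (Fin s)) x.1.1 x.1.2

noncomputable def Decomposition.toPerm {m : ℕ} (d : Decomposition m) : Perm (Fin m) :=
  assemble d.2.1.1 (fun i => (d.2.2.1 i).2) (by rw [d.2.2.2]; exact mem_antidiagonal.1 d.1.2)

theorem Decomposition.bijective_toPerm (m : ℕ) :
    Function.Bijective (Decomposition.toPerm (m := m)) := by
  refine ⟨?_, fun σ => ?_⟩
  · rintro ⟨⟨⟨j, t⟩, h⟩, ⟨τ, hτ⟩, b, hb⟩ ⟨⟨⟨j', t'⟩, h'⟩, ⟨τ', hτ'⟩, b', hb'⟩ heq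
    obtain rfl : j = j' := by
      have e : (heads (Decomposition.toPerm ⟨⟨(j, t), h⟩, ⟨τ, hτ⟩, b, hb⟩)).card = j :=
        (isBlockDecomposition_assemble _ _ _).card_heads hτ
      have e' : (heads (Decomposition.toPerm ⟨⟨(j', t'), h'⟩, ⟨τ', hτ'⟩, b', hb'⟩)).card = j' :=
        (isBlockDecomposition_assemble _ _ _).card_heads hτ'
      rw [heq] at e
      exact e.symm.trans e'
    obtain rfl : t = t' := by
      have := mem_antidiagonal.1 h
      have := mem_antidiagonal.1 h'
      dsimp only at *
      omega
    obtain ⟨rfl, rfl⟩ := eq_of_assemble_eq hτ hτ' heq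
    rfl
  · have hσ := isBlockDecomposition_inducedPerm σ
    exact ⟨⟨⟨((heads σ).card, ∑ i, gapSizes σ i), mem_antidiagonal.2 hσ.total⟩,
      ⟨inducedPerm σ, sif_inducedPerm σ⟩, fun i => ⟨gapSizes σ i, hσ.gapPerm i⟩, rfl⟩,
      hσ.eq_assemble_gapPerm.symm⟩

theorem factorial_eq_sum_card_sifPerm_mul (m : ℕ) :
    m ! = ∑ x ∈ antidiagonal m,
      Nat.card (SIFPerm x.1) * Nat.card (Tuples (fun s => Perm (Fin s)) x.1 x.2) := by
  have hcard : Nat.card (Perm (Fin m)) = m ! := by rw [Nat.card_perm, Nat.card_fin]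
  rw [← hcard, ← Nat.card_congr (Equiv.ofBijective _ (Decomposition.bijective_toPerm m)),
    Nat.card_sigma, ← sum_coe_sort (antidiagonal m)]
  exact Fintype.sum_congr _ _ fun x => Nat.card_prod _ _

theorem coeff_genSeries_perm_eq_sum (m : ℕ) :
    coeff m (genSeries fun s => Perm (Fin s)) = ∑ x ∈ antidiagonal m,
      Nat.card (SIFPerm x.1) * coeff x.2 ((genSeries fun s => Perm (Fin s)) ^ x.1) := by
  rw [coeff_genSeries, Nat.card_perm, Nat.card_fin, factorial_eq_sum_card_sifPerm_mul]
  simp only [Tuples.card_eq_coeff]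

def sigmaSIFEquiv : {p : Σ m, Perm (Fin m) // SIF p.2} ≃ Σ s, SIFPerm s where
  toFun p := ⟨p.1.1, p.1.2, p.2⟩
  invFun q := ⟨⟨q.1, q.2.1⟩, q.2.2⟩

def listEquivTuples (n m : ℕ) :
    {L : List (Σ m : ℕ, Perm (Fin m)) //
      L.length = n ∧ (∀ p ∈ L, SIF p.2) ∧ (L.map (fun p => p.1)).sum = m} ≃
      Tuples SIFPerm n m where
  toFun L := ⟨fun i => sigmaSIFEquiv ⟨L.1.get (i.cast L.2.1.symm), L.2.2.1 _ (List.get_mem _ _)⟩,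
    by
    obtain ⟨L, rfl, -, hsum⟩ := L
    refine Eq.trans ?_ hsum
    conv_rhs => rw [← List.ofFn_get L, List.map_ofFn, List.sum_ofFn]
    rfl⟩
  invFun b := ⟨List.ofFn fun i => (sigmaSIFEquiv.symm (b.1 i)).1, List.length_ofFn,
    by simp only [List.mem_ofFn, forall_exists_index]; rintro _ i rfl; exact (b.1 i).2.2,
    by simpa [List.sum_ofFn, sigmaSIFEquiv] using b.2⟩
  left_inv L := by
    obtain ⟨L, rfl, -⟩ := L
    exact Subtype.ext (List.ofFn_get L)
  right_inv b := Subtype.ext <| funext fun i =>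
    (congrArg sigmaSIFEquiv (Subtype.ext (List.get_ofFn _ _))).trans
      (sigmaSIFEquiv.apply_symm_apply _)

theorem stmt9_general (n : ℕ) :
    Nat.card {L : List (Σ m : ℕ, Equiv.Perm (Fin m)) //
      L.length = n ∧ (∀ p ∈ L, SIF p.2) ∧ (L.map (fun p => p.1)).sum = n - 1} =
      n.factorial := by
  rw [Nat.card_congr (listEquivTuples _ _)]
  cases n with
  | zero => rw [Tuples.card_zero]; rfl
  | succ m =>
    rw [Nat.add_sub_cancel, card_tuples_eq_mul_card_dominated,
      Dominated.card_eq_coeff coeff_genSeries_perm_eq_sum, pow_one, coeff_genSeries,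
      Nat.card_perm, Nat.card_fin, Nat.factorial_succ]

/-- The number of `n`-lists of SIF permutations (empty permutation allowed) of total
length `n - 1` is `n!`. -/
theorem stmt9 (n : ℕ) (hn : 1 ≤ n) :
    Nat.card {L : List (Σ m : ℕ, Equiv.Perm (Fin m)) //
      L.length = n ∧ (∀ p ∈ L, SIF p.2) ∧ (L.map (fun p => p.1)).sum = n - 1} =
      n.factorial :=
  stmt9_general n
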